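/- arXiv:1706.03728 — 5 statements merged into one kernel-verified Lean document; each statement's English description precedes it below -/
import Mathlib

section
/- A set-valued map f : D → 2^Y is convexlike on D if and only if the set f(D) + Y₊ is convex. -/
/-!
A convex set closed under positive scaling is closed under addition, so a convex combination of
two points `s + c` and `t + d` of `S + C` splits as a convex combination of `s, t` plus an
element of `C`. Hence `S + C` is convex as soon as every strict convex combination of two points of
`S` lies in `S + C`; conversely, since `0 ∈ C` gives `S ⊆ S + C`, convexity of `S + C`
forces that condition. For `S = f(D)` the condition is exactly convexlikeness of `f`.
-/

open Pointwise Set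

theorem Convex.add_mem_of_smul_subset {𝕜 E : Type*} [Field 𝕜] [LinearOrder 𝕜]
    [IsStrictOrderedRing 𝕜] [AddCommMonoid E] [Module 𝕜 E] {C : Set E}
    (hC : Convex 𝕜 C) (hsmul : ∀ t : 𝕜, 0 < t → t • C ⊆ C)
    {z w : E} (hz : z ∈ C) (hw : w ∈ C) : z + w ∈ C := by
  have hmid : (2⁻¹ : 𝕜) • z + (2⁻¹ : 𝕜) • w ∈ C :=
    hC hz hw (by positivity) (by positivity) (by norm_num)
  have hscaled := hsmul 2 two_pos (smul_mem_smul_set hmid)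
  rwa [smul_add, smul_inv_smul₀ two_ne_zero, smul_inv_smul₀ two_ne_zero] at hscaled

theorem convex_add_iff_forall_pos {𝕜 E : Type*} [Semiring 𝕜] [PartialOrder 𝕜]
    [AddCommMonoid E] [Module 𝕜 E] {S C : Set E} (hC : Convex 𝕜 C)
    (hadd : ∀ z ∈ C, ∀ w ∈ C, z + w ∈ C) (hC0 : (0 : E) ∈ C) :
    Convex 𝕜 (S + C) ↔ ∀ x ∈ S, ∀ y ∈ S, ∀ a b : 𝕜, 0 < a → 0 < b → a + b = 1 →
      a • x + b • y ∈ S + C := by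
  constructor
  · intro hconv x hx y hy a b ha hb hab
    exact hconv (subset_add_left S hC0 hx) (subset_add_left S hC0 hy) ha.le hb.le hab
  · refine fun hS ↦ convex_iff_forall_pos.2 ?_
    rintro - ⟨s, hs, c, hc, rfl⟩ - ⟨t, ht, d, hd, rfl⟩ a b ha hb hab
    obtain ⟨s', hs', c', hc', hsplit⟩ := hS s hs t ht a b ha hb hab
    refine ⟨s', hs', c' + (a • c + b • d), hadd _ hc' _ (hC hc hd ha.le hb.le hab), ?_⟩
    dsimp only at hsplit ⊢
    rw [← add_assoc, hsplit]
    simp only [smul_add]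
    abel

theorem forall_smul_add_smul_subset_iff {X E : Type*} [AddCommMonoid E] [Module ℝ E]
    (D : Set X) (f : X → Set E) (T : Set E) :
    (∀ x1 ∈ D, ∀ x2 ∈ D, ∀ α : ℝ, α ∈ Ioo (0 : ℝ) 1 → α • f x1 + (1 - α) • f x2 ⊆ T) ↔
      ∀ y1 ∈ ⋃ x ∈ D, f x, ∀ y2 ∈ ⋃ x ∈ D, f x, ∀ a b : ℝ, 0 < a → 0 < b → a + b = 1 →
        a • y1 + b • y2 ∈ T := by
  simp only [mem_iUnion₂]
  constructor
  · rintro h y1 ⟨x1, hx1, hy1⟩ y2 ⟨x2, hx2, hy2⟩ a b ha hb hab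
    obtain rfl : b = 1 - a := by linarith
    exact h x1 hx1 x2 hx2 a ⟨ha, by linarith⟩
      (add_mem_add (smul_mem_smul_set hy1) (smul_mem_smul_set hy2))
  · rintro h x1 hx1 x2 hx2 α ⟨hα0, hα1⟩ - ⟨-, ⟨y1, hy1, rfl⟩, -, ⟨y2, hy2, rfl⟩, rfl⟩
    exact h y1 ⟨x1, hx1, hy1⟩ y2 ⟨x2, hx2, hy2⟩ α (1 - α) hα0 (by linarith) (by ring)

theorem convexlike_iff_add_cone_convex_general
    {X Y : Type*} [AddCommGroup Y] [Module ℝ Y]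
    (D : Set X) (f : X → Set Y)
    (Ypos : Set Y) (hYconv : Convex ℝ Ypos) (hY0 : (0 : Y) ∈ Ypos)
    (hYcone : ∀ t : ℝ, 0 < t → t • Ypos ⊆ Ypos) :
    (∀ x1 ∈ D, ∀ x2 ∈ D, ∀ α : ℝ, α ∈ Set.Ioo (0 : ℝ) 1 →
        α • f x1 + (1 - α) • f x2 ⊆ (⋃ x ∈ D, f x) + Ypos) ↔
      Convex ℝ ((⋃ x ∈ D, f x) + Ypos) := by
  have hYadd : ∀ z ∈ Ypos, ∀ w ∈ Ypos, z + w ∈ Ypos := fun _ hz _ hw ↦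
    hYconv.add_mem_of_smul_subset hYcone hz hw
  rw [forall_smul_add_smul_subset_iff, convex_add_iff_forall_pos hYconv hYadd hY0]

/-- A set-valued map `f` is convexlike on `D` iff `f(D) + Y₊` is convex. -/
theorem convexlike_iff_add_cone_convex
    {X Y : Type*} [AddCommGroup Y] [Module ℝ Y]
    [TopologicalSpace Y] [IsTopologicalAddGroup Y] [ContinuousSMul ℝ Y]
    (D : Set X) (hD : D.Nonempty) (f : X → Set Y)
    (Ypos : Set Y) (hYconv : Convex ℝ Ypos) (hY0 : (0 : Y) ∈ Ypos)
    (hYcone : ∀ t : ℝ, 0 < t → t • Ypos ⊆ Ypos) :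
    (∀ x1 ∈ D, ∀ x2 ∈ D, ∀ α : ℝ, α ∈ Set.Ioo (0 : ℝ) 1 →
        α • f x1 + (1 - α) • f x2 ⊆ (⋃ x ∈ D, f x) + Ypos) ↔
      Convex ℝ ((⋃ x ∈ D, f x) + Ypos) :=
  convexlike_iff_add_cone_convex_general D f Ypos hYconv hY0 hYcone
end

section
/- A set-valued map f : D → 2^Y is subconvexlike on D if and only if the set f(D) + int Y₊ is convex. -/
/-!
If `f` is subconvexlike with bounded perturbation set `U`, take `y₁ = a₁ + c₁`, `y₂ = a₂ + c₂` in
`f(D) + int Y₊`. The point `c = α c₁ + (1 - α) c₂` lies in `int Y₊`, and since `U` is bounded,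
`c - ε u ∈ int Y₊` for some `ε > 0` and `u ∈ U`. Subconvexlikeness writes `ε u + α a₁ + (1 - α) a₂`
as `a + p` with `a ∈ f(D)`, `p ∈ Y₊`, so `α y₁ + (1 - α) y₂ = a + (p + (c - ε u))`, and
`Y₊ + int Y₊ ⊆ int Y₊` puts this in `f(D) + int Y₊`.

Conversely, if `f(D) + int Y₊` is convex, any `u ∈ int Y₊` works: `ε u ∈ int Y₊`, and
`ε u + α a₁ + (1 - α) a₂ = α (a₁ + ε u) + (1 - α) (a₂ + ε u)`.
-/

open Set Topology Pointwise

section Cone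

variable {Y : Type*} [AddCommGroup Y] {P : Set Y}

theorem add_interior_subset_interior [TopologicalSpace Y] [IsTopologicalAddGroup Y]
    (hP : P + P ⊆ P) : P + interior P ⊆ interior P :=
  interior_maximal ((add_subset_add_left interior_subset).trans hP) isOpen_interior.add_left

variable [Module ℝ Y]

theorem Convex.add_mem_of_smul_subset_s1 (hconv : Convex ℝ P) (hcone : ∀ t : ℝ, 0 < t → t • P ⊆ P)
    {a b : Y} (ha : a ∈ P) (hb : b ∈ P) : a + b ∈ P := by
  have hmid : (1 / 2 : ℝ) • a + (1 / 2 : ℝ) • b ∈ P :=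
    hconv ha hb (by norm_num) (by norm_num) (by norm_num)
  convert hcone 2 two_pos (smul_mem_smul_set hmid) using 1
  module

theorem smul_interior_subset_interior [TopologicalSpace Y] [ContinuousConstSMul ℝ Y]
    (hcone : ∀ t : ℝ, 0 < t → t • P ⊆ P) {t : ℝ} (ht : 0 < t) :
    t • interior P ⊆ interior P := by
  rw [← interior_smul₀ ht.ne']
  exact interior_mono (hcone t ht)

end Cone

theorem Bornology.IsVonNBounded.exists_pos_mapsTo_smul {Y : Type*} [AddCommGroup Y] [Module ℝ Y]
    [TopologicalSpace Y] {U V : Set Y} (hU : Bornology.IsVonNBounded ℝ U) (hV : V ∈ 𝓝 0) :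
    ∃ ε : ℝ, 0 < ε ∧ MapsTo (ε • ·) U V := by
  obtain ⟨ε, hmaps, hε⟩ :=
    (((hU hV).eventually_nhds_zero (mem_of_mem_nhds hV)).filter_mono nhdsWithin_le_nhds).and
      (self_mem_nhdsWithin (s := Ioi 0)) |>.exists
  exact ⟨ε, hε, hmaps⟩

section Combination

variable {Y : Type*} [AddCommGroup Y] [Module ℝ Y]

theorem add_combo_mem_of_convex_add {F C : Set Y} (hconv : Convex ℝ (F + C)) {a₁ a₂ v : Y}
    (ha₁ : a₁ ∈ F) (ha₂ : a₂ ∈ F) (hv : v ∈ C) {α : ℝ} (hα : α ∈ Icc (0 : ℝ) 1) :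
    v + α • a₁ + (1 - α) • a₂ ∈ F + C := by
  convert hconv (add_mem_add ha₁ hv) (add_mem_add ha₂ hv) hα.1 (sub_nonneg.2 hα.2)
    (add_sub_cancel α 1) using 1
  module

variable [TopologicalSpace Y] [IsTopologicalAddGroup Y] [ContinuousConstSMul ℝ Y]

theorem convex_add_interior_of_forall_smul_add_combo_mem {F P U : Set Y} (hconv : Convex ℝ P)
    (hP : P + interior P ⊆ interior P) (hU : U.Nonempty) (hUb : Bornology.IsVonNBounded ℝ U)
    (h : ∀ a₁ ∈ F, ∀ a₂ ∈ F, ∀ α ∈ Ioo (0 : ℝ) 1, ∀ ε : ℝ, 0 < ε → ∀ u ∈ U,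
      ε • u + α • a₁ + (1 - α) • a₂ ∈ F + P) :
    Convex ℝ (F + interior P) := by
  rw [convex_iff_forall_pos]
  rintro _ ⟨a₁, ha₁, c₁, hc₁, rfl⟩ _ ⟨a₂, ha₂, c₂, hc₂, rfl⟩ α β hα hβ hαβ
  obtain rfl : β = 1 - α := eq_sub_of_add_eq' hαβ
  set c := α • c₁ + (1 - α) • c₂
  have hc : c ∈ interior P := hconv.interior hc₁ hc₂ hα.le hβ.le hαβ
  have hnhds : (c - ·) ⁻¹' interior P ∈ 𝓝 0 :=
    (isOpen_interior.preimage (continuous_const.sub continuous_id)).mem_nhds (by simpa using hc)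
  obtain ⟨ε, hε, hmaps⟩ := hUb.exists_pos_mapsTo_smul hnhds
  obtain ⟨u, hu⟩ := hU
  obtain ⟨a, ha, p, hp, hsum⟩ := h a₁ ha₁ a₂ ha₂ α ⟨hα, by linarith⟩ ε hε u hu
  have hrest : p + (c - ε • u) ∈ interior P := hP (add_mem_add hp (hmaps hu))
  convert add_mem_add ha hrest using 1
  rw [← add_assoc, show a + p = _ from hsum]
  module

end Combination

theorem subconvexlike_iff_add_interior_convex_general
    {X Y : Type*} [AddCommGroup Y] [Module ℝ Y]
    [TopologicalSpace Y] [IsTopologicalAddGroup Y] [ContinuousSMul ℝ Y]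
    (D : Set X) (f : X → Set Y)
    (Ypos : Set Y) (hYconv : Convex ℝ Ypos)
    (hYcone : ∀ t : ℝ, 0 < t → t • Ypos ⊆ Ypos)
    (hYint : (interior Ypos).Nonempty) :
    (∃ U : Set Y, U.Nonempty ∧ Bornology.IsVonNBounded ℝ U ∧
        ∀ x1 ∈ D, ∀ x2 ∈ D, ∀ α : ℝ, α ∈ Set.Ioo (0 : ℝ) 1 → ∀ ε : ℝ, 0 < ε →
          ε • U + α • f x1 + (1 - α) • f x2 ⊆ (⋃ x ∈ D, f x) + Ypos) ↔
      Convex ℝ ((⋃ x ∈ D, f x) + interior Ypos) := by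
  have hadd : Ypos + Ypos ⊆ Ypos := by
    rintro _ ⟨a, ha, b, hb, rfl⟩
    exact hYconv.add_mem_of_smul_subset_s1 hYcone ha hb
  constructor
  · rintro ⟨U, hU, hUb, hsub⟩
    refine convex_add_interior_of_forall_smul_add_combo_mem hYconv
      (add_interior_subset_interior hadd) hU hUb ?_
    intro a₁ ha₁ a₂ ha₂ α hα ε hε u hu
    obtain ⟨x₁, hx₁, ha₁⟩ := mem_iUnion₂.1 ha₁
    obtain ⟨x₂, hx₂, ha₂⟩ := mem_iUnion₂.1 ha₂
    exact hsub x₁ hx₁ x₂ hx₂ α hα ε hε <|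
      add_mem_add (add_mem_add (smul_mem_smul_set hu) (smul_mem_smul_set ha₁))
        (smul_mem_smul_set ha₂)
  · intro hconv
    obtain ⟨u, hu⟩ := hYint
    refine ⟨{u}, singleton_nonempty u, Bornology.isVonNBounded_singleton u, ?_⟩
    rintro x₁ hx₁ x₂ hx₂ α hα ε hε _
      ⟨_, ⟨_, ⟨_, rfl, rfl⟩, _, ⟨a₁, ha₁, rfl⟩, rfl⟩, _, ⟨a₂, ha₂, rfl⟩, rfl⟩
    exact add_subset_add_left interior_subset <|
      add_combo_mem_of_convex_add hconv (mem_biUnion hx₁ ha₁) (mem_biUnion hx₂ ha₂)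
        (smul_interior_subset_interior hYcone hε (smul_mem_smul_set hu)) (Ioo_subset_Icc_self hα)

/-- A set-valued map `f` is subconvexlike on `D` iff `f(D) + int Y₊` is convex. -/
theorem subconvexlike_iff_add_interior_convex
    {X Y : Type*} [AddCommGroup Y] [Module ℝ Y]
    [TopologicalSpace Y] [IsTopologicalAddGroup Y] [ContinuousSMul ℝ Y]
    (D : Set X) (hD : D.Nonempty) (f : X → Set Y)
    (Ypos : Set Y) (hYconv : Convex ℝ Ypos) (hY0 : (0 : Y) ∈ Ypos)
    (hYcone : ∀ t : ℝ, 0 < t → t • Ypos ⊆ Ypos)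
    (hYint : (interior Ypos).Nonempty) :
    (∃ U : Set Y, U.Nonempty ∧ Bornology.IsVonNBounded ℝ U ∧
        ∀ x1 ∈ D, ∀ x2 ∈ D, ∀ α : ℝ, α ∈ Set.Ioo (0 : ℝ) 1 → ∀ ε : ℝ, 0 < ε →
          ε • U + α • f x1 + (1 - α) • f x2 ⊆ (⋃ x ∈ D, f x) + Ypos) ↔
      Convex ℝ ((⋃ x ∈ D, f x) + interior Ypos) :=
  subconvexlike_iff_add_interior_convex_general D f Ypos hYconv hYcone hYint
end

section
/- Let D = {(x₁,x₂) ∈ ℝ² : x₁ ≥ 0, x₂ ≥ 0, x₁² + x₂² ≥ 1} and define f : D → 2^{ℝ²} by f(x₁,x₂) = {(x₁,x₂)} ∪ {(a,b) : a ≥ 0, b ≥ 0, a² + b² = 1}. Then with Y₊ = ℝ²₊, the set f(D) + int Y₊ equals {(x₁,x₂) : x₁ > 0, x₂ > 0, x₁² + x₂² > 1} and is not convex, so f is not subconvexlike; but ⋃_{t>0}(t f(D) + int Y₊) = int ℝ²₊ is convex, so f is presubconvexlike. -/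
open Pointwise

/-- Example 2.1: a presubconvexlike map that is not subconvexlike. -/
theorem example_presubconvexlike_not_subconvexlike :
    let D : Set (ℝ × ℝ) := {p | 0 ≤ p.1 ∧ 0 ≤ p.2 ∧ 1 ≤ p.1 ^ 2 + p.2 ^ 2}
    let f : ℝ × ℝ → Set (ℝ × ℝ) :=
      fun p => {p} ∪ {q | 0 ≤ q.1 ∧ 0 ≤ q.2 ∧ q.1 ^ 2 + q.2 ^ 2 = 1}
    let Ypos : Set (ℝ × ℝ) := {p | 0 ≤ p.1 ∧ 0 ≤ p.2}
    let fD : Set (ℝ × ℝ) := ⋃ x ∈ D, f x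
    (fD + interior Ypos = {p : ℝ × ℝ | 0 < p.1 ∧ 0 < p.2 ∧ 1 < p.1 ^ 2 + p.2 ^ 2}) ∧
    ¬ Convex ℝ (fD + interior Ypos) ∧
    (⋃ t ∈ Set.Ioi (0 : ℝ), (t • fD + interior Ypos)) = interior Ypos ∧
    Convex ℝ (⋃ t ∈ Set.Ioi (0 : ℝ), (t • fD + interior Ypos)) := by
  intro D f Ypos fD
  have hYprod : Ypos = Set.Ici (0:ℝ) ×ˢ Set.Ici (0:ℝ) := by
    ext p; simp [Ypos, Set.mem_prod, Prod.le_def]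
  have hY : interior Ypos = Set.Ioi (0:ℝ) ×ˢ Set.Ioi (0:ℝ) := by
    rw [hYprod, interior_prod_eq, interior_Ici]
  -- membership in fD
  have hmemfD : ∀ p : ℝ × ℝ, p ∈ fD ↔ (0 ≤ p.1 ∧ 0 ≤ p.2 ∧ 1 ≤ p.1^2 + p.2^2) := by
    intro p
    constructor
    · intro hp
      simp only [fD, Set.mem_iUnion] at hp
      obtain ⟨x, hx, hpx⟩ := hp
      rcases hpx with h | h
      · rw [Set.mem_singleton_iff] at h; subst h; exact hx
      · exact ⟨h.1, h.2.1, le_of_eq h.2.2.symm⟩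
    · intro h
      simp only [fD, Set.mem_iUnion]
      exact ⟨p, h, Or.inl rfl⟩
  -- Part 1
  have part1 : fD + interior Ypos
      = {p : ℝ × ℝ | 0 < p.1 ∧ 0 < p.2 ∧ 1 < p.1 ^ 2 + p.2 ^ 2} := by
    ext p
    constructor
    · rintro hp
      rw [Set.mem_add] at hp
      obtain ⟨x, hx, u, hu, hxu⟩ := hp
      rw [hmemfD] at hx
      rw [hY, Set.mem_prod, Set.mem_Ioi, Set.mem_Ioi] at hu
      obtain ⟨hx1, hx2, hxs⟩ := hx
      have h1 : p.1 = x.1 + u.1 := by rw [← hxu]; rfl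
      have h2 : p.2 = x.2 + u.2 := by rw [← hxu]; rfl
      refine ⟨by nlinarith [hu.1], by nlinarith [hu.2], ?_⟩
      rw [h1, h2]
      nlinarith [hu.1, hu.2]
    · rintro ⟨hp1, hp2, hps⟩
      set s : ℝ := p.1 ^ 2 + p.2 ^ 2 with hs
      have hs0 : (0:ℝ) < s := by nlinarith
      set r : ℝ := Real.sqrt s with hrdef
      have hr1 : 1 < r := by
        rw [hrdef]
        rw [show (1:ℝ) = Real.sqrt 1 by simp]
        exact Real.sqrt_lt_sqrt (by norm_num) hps
      have hr0 : (0:ℝ) < r := lt_trans one_pos hr1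
      have hrsq : r ^ 2 = s := Real.sq_sqrt hs0.le
      rw [Set.mem_add]
      refine ⟨(p.1 / r, p.2 / r), ?_, (p.1 - p.1 / r, p.2 - p.2 / r), ?_, ?_⟩
      · rw [hmemfD]
        refine ⟨div_nonneg hp1.le hr0.le, div_nonneg hp2.le hr0.le, ?_⟩
        have : (p.1 / r) ^ 2 + (p.2 / r) ^ 2 = 1 := by
          field_simp
          rw [hrsq]
        rw [this]
      · rw [hY, Set.mem_prod, Set.mem_Ioi, Set.mem_Ioi]
        constructor
        · exact sub_pos.mpr (div_lt_self hp1 hr1)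
        · exact sub_pos.mpr (div_lt_self hp2 hr1)
      · ext <;> simp
  refine ⟨part1, ?_, ?_, ?_⟩
  -- Part 2
  · rw [part1]
    intro hconv
    have ha : ((11:ℝ)/10, (1:ℝ)/10) ∈ {p : ℝ × ℝ | 0 < p.1 ∧ 0 < p.2 ∧ 1 < p.1 ^ 2 + p.2 ^ 2} := by
      constructor <;> norm_num
    have hb : ((1:ℝ)/10, (11:ℝ)/10) ∈ {p : ℝ × ℝ | 0 < p.1 ∧ 0 < p.2 ∧ 1 < p.1 ^ 2 + p.2 ^ 2} := by
      constructor <;> norm_num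
    have hmid := hconv ha hb (by norm_num : (0:ℝ) ≤ 1/2) (by norm_num : (0:ℝ) ≤ 1/2) (by norm_num)
    simp only [Prod.smul_mk, Prod.mk_add_mk, smul_eq_mul, Set.mem_setOf_eq] at hmid
    norm_num at hmid
  -- Part 3
  · have part3 : (⋃ t ∈ Set.Ioi (0 : ℝ), (t • fD + interior Ypos)) = interior Ypos := by
      ext p
      simp only [Set.mem_iUnion, Set.mem_Ioi]
      constructor
      · rintro ⟨t, ht, hp⟩
        rw [Set.mem_add] at hp
        obtain ⟨y, hy, u, hu, hyu⟩ := hp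
        rw [Set.mem_smul_set] at hy
        obtain ⟨x, hx, hxy⟩ := hy
        rw [hmemfD] at hx
        rw [hY, Set.mem_prod, Set.mem_Ioi, Set.mem_Ioi] at hu ⊢
        have h1 : p.1 = t * x.1 + u.1 := by rw [← hyu, ← hxy]; rfl
        have h2 : p.2 = t * x.2 + u.2 := by rw [← hyu, ← hxy]; rfl
        constructor
        · rw [h1]; exact add_pos_of_nonneg_of_pos (mul_nonneg ht.le hx.1) hu.1
        · rw [h2]; exact add_pos_of_nonneg_of_pos (mul_nonneg ht.le hx.2.1) hu.2
      · intro hp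
        rw [hY, Set.mem_prod, Set.mem_Ioi, Set.mem_Ioi] at hp
        refine ⟨p.1 / 2, half_pos hp.1, ?_⟩
        rw [Set.mem_add]
        refine ⟨(p.1/2) • ((1:ℝ), (0:ℝ)), Set.smul_mem_smul_set ?_, (p.1/2, p.2), ?_, ?_⟩
        · rw [hmemfD]; norm_num
        · rw [hY, Set.mem_prod, Set.mem_Ioi, Set.mem_Ioi]
          exact ⟨half_pos hp.1, hp.2⟩
        · simp only [Prod.smul_mk, Prod.mk_add_mk, smul_eq_mul]
          ext <;> simp
    exact part3
  · have part3 : (⋃ t ∈ Set.Ioi (0 : ℝ), (t • fD + interior Ypos)) = interior Ypos := by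
      ext p
      simp only [Set.mem_iUnion, Set.mem_Ioi]
      constructor
      · rintro ⟨t, ht, hp⟩
        rw [Set.mem_add] at hp
        obtain ⟨y, hy, u, hu, hyu⟩ := hp
        rw [Set.mem_smul_set] at hy
        obtain ⟨x, hx, hxy⟩ := hy
        rw [hmemfD] at hx
        rw [hY, Set.mem_prod, Set.mem_Ioi, Set.mem_Ioi] at hu ⊢
        have h1 : p.1 = t * x.1 + u.1 := by rw [← hyu, ← hxy]; rfl
        have h2 : p.2 = t * x.2 + u.2 := by rw [← hyu, ← hxy]; rfl
        constructor
        · rw [h1]; exact add_pos_of_nonneg_of_pos (mul_nonneg ht.le hx.1) hu.1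
        · rw [h2]; exact add_pos_of_nonneg_of_pos (mul_nonneg ht.le hx.2.1) hu.2
      · intro hp
        rw [hY, Set.mem_prod, Set.mem_Ioi, Set.mem_Ioi] at hp
        refine ⟨p.1 / 2, half_pos hp.1, ?_⟩
        rw [Set.mem_add]
        refine ⟨(p.1/2) • ((1:ℝ), (0:ℝ)), Set.smul_mem_smul_set ?_, (p.1/2, p.2), ?_, ?_⟩
        · rw [hmemfD]; norm_num
        · rw [hY, Set.mem_prod, Set.mem_Ioi, Set.mem_Ioi]
          exact ⟨half_pos hp.1, hp.2⟩
        · simp only [Prod.smul_mk, Prod.mk_add_mk, smul_eq_mul]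
          ext <;> simp
    rw [part3, hY]
    exact (convex_Ioi _).prod (convex_Ioi _)
end

section
/- (Necessity of scalar Lagrange multipliers.) Let x̄ ∈ D be a weakly efficient solution of (VP), and assume the alternative theorem applies to the maps f(·) − ȳ, g, h (i.e., the generalized convexity condition (a1) and interior condition (a2) hold for them). Then there exist ȳ ∈ f(x̄) and multipliers ξ ∈ Y₊*, η ∈ Z₊*, ζ ∈ W*, not all zero, such that ξ(y) + η(z) + ζ(w) ≥ ξ(ȳ) for all x ∈ D, y ∈ f(x), z ∈ g(x), w ∈ h(x), and moreover min η(g(x̄)) = 0 (there exists z̄ ∈ g(x̄) with η(z̄) = 0 and η(z) ≥ 0 for all z ∈ g(x̄)). -/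
/-!
Weak efficiency of `xbar` with value `ybar` says that no `ybar - y`, `y ∈ f(D)`, is interior to
`Y₊`, i.e. that `0` lies outside the first factor `⋃_{t>0} (t (f(D) - ybar) + int Y₊)` of the
product set `S` of (a1). As `S` is convex with nonempty interior (a2), Hahn–Banach gives a nonzero
functional `(ξ, η, ζ)` that is nonnegative on `S`. Evaluating it at `(y - ybar + t k, z + t k', w)`
with `k, k'` interior to the cones and letting `t → 0` gives the Lagrange inequality; letting
`t → ∞` gives `ξ ≥ 0` on `int Y₊`, hence on `Y₊`, and likewise `η ≥ 0` on `Z₊`. The Lagrange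
inequality at `(xbar, ybar, w = 0)` gives `η ≥ 0` on `g(xbar)`, while a point
`zbar ∈ g(xbar) ∩ (-Z₊)` has `η zbar ≤ 0`.
-/

open Set Pointwise

open Filter Topology in
theorem nonneg_of_forall_pos_add_mul_nonneg_left {a b : ℝ} (h : ∀ t > 0, 0 ≤ a + t * b) :
    0 ≤ a := by
  have hcont : Continuous fun t : ℝ => a + t * b := by fun_prop
  have hlim : Tendsto (fun t : ℝ => a + t * b) (𝓝[>] 0) (𝓝 a) :=
    (hcont.tendsto' 0 a (by simp)).mono_left nhdsWithin_le_nhds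
  exact ge_of_tendsto hlim (eventually_nhdsWithin_of_forall h)

theorem nonneg_of_forall_pos_add_mul_nonneg_right {a b : ℝ} (h : ∀ t > 0, 0 ≤ a + t * b) :
    0 ≤ b := by
  refine nonneg_of_forall_pos_add_mul_nonneg_left (b := a) fun s hs => ?_
  have := mul_nonneg hs.le (h s⁻¹ (inv_pos.2 hs))
  rwa [mul_add, mul_inv_cancel_left₀ hs.ne', add_comm] at this

section Cone

variable {E : Type*} [AddCommGroup E] [Module ℝ E] [TopologicalSpace E] {P : Set E}

theorem smul_interior_subset_of_smul_subset [ContinuousConstSMul ℝ E]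
    (hcone : ∀ t : ℝ, 0 < t → t • P ⊆ P) {t : ℝ} (ht : 0 < t) :
    t • interior P ⊆ interior P :=
  (interior_smul₀ ht.ne' P).symm.subset.trans (interior_mono (hcone t ht))

theorem zero_notMem_iUnion_smul_add_interior [ContinuousConstSMul ℝ E]
    (hcone : ∀ t : ℝ, 0 < t → t • P ⊆ P) {A : Set E} (hA : ∀ a ∈ A, -a ∉ interior P) :
    (0 : E) ∉ ⋃ t ∈ Ioi (0 : ℝ), (t • A + interior P) := by
  simp only [mem_iUnion, Set.mem_add, mem_smul_set, not_exists, not_and]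
  rintro t ht _ ⟨a, ha, rfl⟩ k hk hsum
  have hneg : -a = t⁻¹ • k := by
    rw [eq_inv_smul_iff₀ ht.ne', smul_neg, neg_eq_of_add_eq_zero_right hsum]
  exact hA a ha (hneg ▸ smul_interior_subset_of_smul_subset hcone (inv_pos.2 ht)
    (smul_mem_smul_set hk))

theorem nonneg_of_forall_mem_interior_nonneg [IsTopologicalAddGroup E] [ContinuousSMul ℝ E]
    (hconv : Convex ℝ P) (hint : (interior P).Nonempty) (ℓ : E →L[ℝ] ℝ)
    (h : ∀ k ∈ interior P, 0 ≤ ℓ k) :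
    ∀ y ∈ P, 0 ≤ ℓ y := fun y hy => by
  refine closure_minimal h (isClosed_Ici.preimage ℓ.continuous) ?_
  rw [hconv.closure_interior_eq_closure_of_nonempty_interior hint]
  exact subset_closure hy

theorem exists_ne_zero_forall_nonneg_of_zero_notMem [IsTopologicalAddGroup E]
    [ContinuousSMul ℝ E] {S : Set E} (hS : Convex ℝ S) (hSint : (interior S).Nonempty)
    (h0 : (0 : E) ∉ S) : ∃ ψ : E →L[ℝ] ℝ, ψ ≠ 0 ∧ ∀ p ∈ S, 0 ≤ ψ p := by
  obtain ⟨φ, hφ, hφS⟩ := geometric_hahn_banach_of_nonempty_interior_point hS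
    (fun h => h0 (interior_subset h)) hSint
  exact ⟨-φ, neg_ne_zero.2 hφ, fun p hp => by simpa using hφS p hp⟩

end Cone

theorem ContinuousLinearMap.apply_triple {R Y Z W M : Type*} [Semiring R]
    [TopologicalSpace Y] [AddCommMonoid Y] [Module R Y]
    [TopologicalSpace Z] [AddCommMonoid Z] [Module R Z]
    [TopologicalSpace W] [AddCommMonoid W] [Module R W]
    [TopologicalSpace M] [AddCommMonoid M] [Module R M]
    (ψ : Y × Z × W →L[R] M) (y : Y) (z : Z) (w : W) :
    ψ (y, z, w) = ψ.comp (inl R Y (Z × W)) y + ψ.comp ((inr R Y (Z × W)).comp (inl R Z W)) z +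
      ψ.comp ((inr R Y (Z × W)).comp (inr R Z W)) w := by
  simp [← map_add]

theorem ContinuousLinearMap.comp_inl_ne_zero_or_comp_inr_inl_ne_zero_or_comp_inr_inr_ne_zero
    {R Y Z W M : Type*} [Semiring R]
    [TopologicalSpace Y] [AddCommMonoid Y] [Module R Y]
    [TopologicalSpace Z] [AddCommMonoid Z] [Module R Z]
    [TopologicalSpace W] [AddCommMonoid W] [Module R W]
    [TopologicalSpace M] [AddCommMonoid M] [Module R M]
    {ψ : Y × Z × W →L[R] M} (hψ : ψ ≠ 0) :
    ψ.comp (inl R Y (Z × W)) ≠ 0 ∨ ψ.comp ((inr R Y (Z × W)).comp (inl R Z W)) ≠ 0 ∨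
      ψ.comp ((inr R Y (Z × W)).comp (inr R Z W)) ≠ 0 := by
  by_contra! hzero
  obtain ⟨hY, hZ, hW⟩ := hzero
  refine hψ (ext fun ⟨y, z, w⟩ => ?_)
  rw [ψ.apply_triple, hY, hZ, hW]
  simp

theorem exists_multipliers_of_forall_neg_notMem_interior
    {Y Z W : Type*}
    [AddCommGroup Y] [Module ℝ Y] [TopologicalSpace Y] [IsTopologicalAddGroup Y]
    [ContinuousSMul ℝ Y]
    [AddCommGroup Z] [Module ℝ Z] [TopologicalSpace Z] [IsTopologicalAddGroup Z]
    [ContinuousSMul ℝ Z]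
    [AddCommGroup W] [Module ℝ W] [TopologicalSpace W] [IsTopologicalAddGroup W]
    [ContinuousSMul ℝ W]
    {P : Set Y} (hPconv : Convex ℝ P) (hPcone : ∀ t : ℝ, 0 < t → t • P ⊆ P)
    (hPint : (interior P).Nonempty)
    {Q : Set Z} (hQconv : Convex ℝ Q) (hQcone : ∀ t : ℝ, 0 < t → t • Q ⊆ Q)
    (hQint : (interior Q).Nonempty)
    {A : Set Y} {B : Set Z} {C : Set W} (hA : ∀ a ∈ A, -a ∉ interior P)
    (hS : Convex ℝ ((⋃ t ∈ Ioi (0 : ℝ), (t • A + interior P)) ×ˢ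
      (⋃ t ∈ Ioi (0 : ℝ), (t • B + interior Q)) ×ˢ ⋃ t ∈ Ioi (0 : ℝ), t • C))
    (hSint : (interior ((⋃ t ∈ Ioi (0 : ℝ), (t • A + interior P)) ×ˢ
      (⋃ t ∈ Ioi (0 : ℝ), (t • B + interior Q)) ×ˢ ⋃ t ∈ Ioi (0 : ℝ), t • C)).Nonempty) :
    ∃ (ξ : Y →L[ℝ] ℝ) (η : Z →L[ℝ] ℝ) (ζ : W →L[ℝ] ℝ), (ξ ≠ 0 ∨ η ≠ 0 ∨ ζ ≠ 0) ∧
      (∀ y ∈ P, 0 ≤ ξ y) ∧ (∀ z ∈ Q, 0 ≤ η z) ∧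
      ∀ a ∈ A, ∀ b ∈ B, ∀ c ∈ C, 0 ≤ ξ a + η b + ζ c := by
  obtain ⟨ψ, hψ, hψS⟩ := exists_ne_zero_forall_nonneg_of_zero_notMem hS hSint
    fun h0 => zero_notMem_iUnion_smul_add_interior hPcone hA h0.1
  set ξ := ψ.comp (.inl ℝ Y (Z × W))
  set η := ψ.comp ((ContinuousLinearMap.inr ℝ Y (Z × W)).comp (.inl ℝ Z W))
  set ζ := ψ.comp ((ContinuousLinearMap.inr ℝ Y (Z × W)).comp (.inr ℝ Z W))
  have hψ_translate : ∀ a ∈ A, ∀ b ∈ B, ∀ c ∈ C, ∀ k ∈ interior P, ∀ k' ∈ interior Q,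
      0 ≤ ξ a + η b + ζ c + (ξ k + η k') := by
    intro a ha b hb c hc k hk k' hk'
    have hmem := hψS (a + k, b + k', c)
      ⟨mem_biUnion (mem_Ioi.2 one_pos) (by rw [one_smul]; exact add_mem_add ha hk),
        mem_biUnion (mem_Ioi.2 one_pos) (by rw [one_smul]; exact add_mem_add hb hk'),
        mem_biUnion (mem_Ioi.2 one_pos) (by rwa [one_smul])⟩
    rw [ψ.apply_triple, map_add, map_add] at hmem
    linarith
  obtain ⟨q, hq⟩ := hSint
  have hqS := interior_subset hq
  simp only [mem_prod, mem_iUnion, Set.mem_add, mem_smul_set] at hqS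
  obtain ⟨⟨-, -, -, ⟨a₀, ha₀, -⟩, -⟩, ⟨-, -, -, ⟨b₀, hb₀, -⟩, -⟩, ⟨-, -, c₀, hc₀, -⟩⟩ := hqS
  obtain ⟨k₀, hk₀⟩ := hPint
  obtain ⟨k₀', hk₀'⟩ := hQint
  refine ⟨ξ, η, ζ, ?_, ?_, ?_, ?_⟩
  · exact ψ.comp_inl_ne_zero_or_comp_inr_inl_ne_zero_or_comp_inr_inr_ne_zero hψ
  · refine nonneg_of_forall_mem_interior_nonneg hPconv ⟨k₀, hk₀⟩ ξ fun k hk =>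
      nonneg_of_forall_pos_add_mul_nonneg_right (a := ξ a₀ + η b₀ + ζ c₀ + η k₀') fun t ht => ?_
    have := hψ_translate a₀ ha₀ b₀ hb₀ c₀ hc₀ _
      (smul_interior_subset_of_smul_subset hPcone ht (smul_mem_smul_set hk)) k₀' hk₀'
    rw [map_smul, smul_eq_mul] at this
    linarith
  · refine nonneg_of_forall_mem_interior_nonneg hQconv ⟨k₀', hk₀'⟩ η fun k hk =>
      nonneg_of_forall_pos_add_mul_nonneg_right (a := ξ a₀ + η b₀ + ζ c₀ + ξ k₀) fun t ht => ?_
    have := hψ_translate a₀ ha₀ b₀ hb₀ c₀ hc₀ k₀ hk₀ _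
      (smul_interior_subset_of_smul_subset hQcone ht (smul_mem_smul_set hk))
    rw [map_smul, smul_eq_mul] at this
    linarith
  · intro a ha b hb c hc
    refine nonneg_of_forall_pos_add_mul_nonneg_left (b := ξ k₀ + η k₀') fun t ht => ?_
    have := hψ_translate a ha b hb c hc _ (smul_interior_subset_of_smul_subset hPcone ht
      (smul_mem_smul_set hk₀)) _ (smul_interior_subset_of_smul_subset hQcone ht
      (smul_mem_smul_set hk₀'))
    rwa [map_smul, map_smul, smul_eq_mul, smul_eq_mul, ← mul_add] at this

theorem scalar_lagrange_necessity_general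
    {X Y Z W : Type*}
    [AddCommGroup Y] [Module ℝ Y] [TopologicalSpace Y] [IsTopologicalAddGroup Y]
    [ContinuousSMul ℝ Y]
    [AddCommGroup Z] [Module ℝ Z] [TopologicalSpace Z] [IsTopologicalAddGroup Z]
    [ContinuousSMul ℝ Z]
    [AddCommGroup W] [Module ℝ W] [TopologicalSpace W] [IsTopologicalAddGroup W]
    [ContinuousSMul ℝ W]
    (f : X → Set Y) (g : X → Set Z) (h : X → Set W)
    (Ypos : Set Y) (hYconv : Convex ℝ Ypos)
    (hYcone : ∀ t : ℝ, 0 < t → t • Ypos ⊆ Ypos)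
    (hYint : (interior Ypos).Nonempty)
    (Zpos : Set Z) (hZconv : Convex ℝ Zpos)
    (hZcone : ∀ t : ℝ, 0 < t → t • Zpos ⊆ Zpos)
    (hZint : (interior Zpos).Nonempty)
    (D : Set X) (hD : D = {x | (g x ∩ (-Zpos)).Nonempty ∧ (0 : W) ∈ h x})
    (xbar : X) (hxbar : xbar ∈ D)
    -- (a1) and (a2) for the maps `f(·) - ybar`, `g`, `h`:
    (ha : ∀ ybar ∈ f xbar,
      Convex ℝ {p : Y × Z × W |
          p.1 ∈ ⋃ t ∈ Set.Ioi (0 : ℝ),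
              (t • ((⋃ x ∈ D, f x) - {ybar}) + interior Ypos) ∧
          p.2.1 ∈ ⋃ t ∈ Set.Ioi (0 : ℝ), (t • (⋃ x ∈ D, g x) + interior Zpos) ∧
          p.2.2 ∈ ⋃ t ∈ Set.Ioi (0 : ℝ), t • (⋃ x ∈ D, h x)} ∧
      (interior {p : Y × Z × W |
          p.1 ∈ ⋃ t ∈ Set.Ioi (0 : ℝ),
              (t • ((⋃ x ∈ D, f x) - {ybar}) + interior Ypos) ∧
          p.2.1 ∈ ⋃ t ∈ Set.Ioi (0 : ℝ), (t • (⋃ x ∈ D, g x) + interior Zpos) ∧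
          p.2.2 ∈ ⋃ t ∈ Set.Ioi (0 : ℝ), t • (⋃ x ∈ D, h x)}).Nonempty)
    -- `xbar` is a weakly efficient solution of (VP):
    (hweff : ∃ ybar ∈ f xbar, ∀ x ∈ D, ∀ y ∈ f x, ybar - y ∉ interior Ypos) :
    ∃ ybar ∈ f xbar, ∃ (ξ : Y →L[ℝ] ℝ) (η : Z →L[ℝ] ℝ) (ζ : W →L[ℝ] ℝ),
      (ξ ≠ 0 ∨ η ≠ 0 ∨ ζ ≠ 0) ∧
      (∀ y ∈ Ypos, 0 ≤ ξ y) ∧ (∀ z ∈ Zpos, 0 ≤ η z) ∧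
      (∀ x ∈ D, ∀ y ∈ f x, ∀ z ∈ g x, ∀ w ∈ h x, ξ ybar ≤ ξ y + η z + ζ w) ∧
      (∃ zbar ∈ g xbar, η zbar = 0) ∧ (∀ z ∈ g xbar, 0 ≤ η z) := by
  obtain ⟨ybar, hybar, hwe⟩ := hweff
  have hA : ∀ a ∈ (⋃ x ∈ D, f x) - {ybar}, -a ∉ interior Ypos := by
    rintro _ ⟨y, hy, _, rfl, rfl⟩
    obtain ⟨x, hx, hyx⟩ := mem_iUnion₂.1 hy
    simpa using hwe x hx y hyx
  obtain ⟨ξ, η, ζ, hne, hξ, hη, hmult⟩ := exists_multipliers_of_forall_neg_notMem_interior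
    hYconv hYcone hYint hZconv hZcone hZint hA (ha ybar hybar).1 (ha ybar hybar).2
  have hlagrange : ∀ x ∈ D, ∀ y ∈ f x, ∀ z ∈ g x, ∀ w ∈ h x, ξ ybar ≤ ξ y + η z + ζ w := by
    intro x hx y hy z hz w hw
    have := hmult _ (sub_mem_sub (mem_biUnion hx hy) rfl) z (mem_biUnion hx hz) w
      (mem_biUnion hx hw)
    rw [map_sub] at this
    linarith
  obtain ⟨⟨zbar, hzbar, hzbar_neg⟩, hw0⟩ := hD ▸ hxbar
  have hslack : ∀ z ∈ g xbar, 0 ≤ η z := fun z hz => by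
    simpa using hlagrange xbar hxbar ybar hybar z hz 0 hw0
  refine ⟨ybar, hybar, ξ, η, ζ, hne, hξ, hη, hlagrange, ⟨zbar, hzbar, ?_⟩, hslack⟩
  have := hη _ hzbar_neg
  rw [map_neg] at this
  linarith [hslack zbar hzbar]

/-- Theorem 3.1 (necessity): if `xbar` is a weakly efficient solution of (VP) and the
generalized convexity condition (a1) and interior condition (a2) hold for
`f(·) - ybar, g, h`, then scalar Lagrange multipliers exist, with complementary
slackness `min η(g(xbar)) = 0`. -/
theorem scalar_lagrange_necessity
    {X Y Z W : Type*}
    [AddCommGroup Y] [Module ℝ Y] [TopologicalSpace Y] [IsTopologicalAddGroup Y]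
    [ContinuousSMul ℝ Y] [LocallyConvexSpace ℝ Y]
    [AddCommGroup Z] [Module ℝ Z] [TopologicalSpace Z] [IsTopologicalAddGroup Z]
    [ContinuousSMul ℝ Z] [LocallyConvexSpace ℝ Z]
    [AddCommGroup W] [Module ℝ W] [TopologicalSpace W] [IsTopologicalAddGroup W]
    [ContinuousSMul ℝ W] [LocallyConvexSpace ℝ W]
    (f : X → Set Y) (g : X → Set Z) (h : X → Set W)
    (Ypos : Set Y) (hYconv : Convex ℝ Ypos) (hY0 : (0 : Y) ∈ Ypos)
    (hYcone : ∀ t : ℝ, 0 < t → t • Ypos ⊆ Ypos)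
    (hYclosed : IsClosed Ypos) (hYpointed : Ypos ∩ (-Ypos) = {0})
    (hYint : (interior Ypos).Nonempty)
    (Zpos : Set Z) (hZconv : Convex ℝ Zpos) (hZ0 : (0 : Z) ∈ Zpos)
    (hZcone : ∀ t : ℝ, 0 < t → t • Zpos ⊆ Zpos)
    (hZclosed : IsClosed Zpos) (hZpointed : Zpos ∩ (-Zpos) = {0})
    (hZint : (interior Zpos).Nonempty)
    (D : Set X) (hD : D = {x | (g x ∩ (-Zpos)).Nonempty ∧ (0 : W) ∈ h x})
    (xbar : X) (hxbar : xbar ∈ D)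
    -- (a1) and (a2) for the maps `f(·) - ybar`, `g`, `h`:
    (ha : ∀ ybar ∈ f xbar,
      Convex ℝ {p : Y × Z × W |
          p.1 ∈ ⋃ t ∈ Set.Ioi (0 : ℝ),
              (t • ((⋃ x ∈ D, f x) - {ybar}) + interior Ypos) ∧
          p.2.1 ∈ ⋃ t ∈ Set.Ioi (0 : ℝ), (t • (⋃ x ∈ D, g x) + interior Zpos) ∧
          p.2.2 ∈ ⋃ t ∈ Set.Ioi (0 : ℝ), t • (⋃ x ∈ D, h x)} ∧
      (interior {p : Y × Z × W |
          p.1 ∈ ⋃ t ∈ Set.Ioi (0 : ℝ),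
              (t • ((⋃ x ∈ D, f x) - {ybar}) + interior Ypos) ∧
          p.2.1 ∈ ⋃ t ∈ Set.Ioi (0 : ℝ), (t • (⋃ x ∈ D, g x) + interior Zpos) ∧
          p.2.2 ∈ ⋃ t ∈ Set.Ioi (0 : ℝ), t • (⋃ x ∈ D, h x)}).Nonempty)
    -- `xbar` is a weakly efficient solution of (VP):
    (hweff : ∃ ybar ∈ f xbar, ∀ x ∈ D, ∀ y ∈ f x, ybar - y ∉ interior Ypos) :
    ∃ ybar ∈ f xbar, ∃ (ξ : Y →L[ℝ] ℝ) (η : Z →L[ℝ] ℝ) (ζ : W →L[ℝ] ℝ),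
      (ξ ≠ 0 ∨ η ≠ 0 ∨ ζ ≠ 0) ∧
      (∀ y ∈ Ypos, 0 ≤ ξ y) ∧ (∀ z ∈ Zpos, 0 ≤ η z) ∧
      (∀ x ∈ D, ∀ y ∈ f x, ∀ z ∈ g x, ∀ w ∈ h x, ξ ybar ≤ ξ y + η z + ζ w) ∧
      (∃ zbar ∈ g xbar, η zbar = 0) ∧ (∀ z ∈ g xbar, 0 ≤ η z) :=
  scalar_lagrange_necessity_general f g h Ypos hYconv hYcone hYint Zpos hZconv hZcone hZint D hD
    xbar hxbar ha hweff
end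

section
/- (Sufficiency of scalar Lagrange multipliers under NNAMCQ.) Let x̄ ∈ D and ȳ ∈ f(x̄). Suppose NNAMCQ holds at x̄, and suppose there exist ξ ∈ Y₊*, η ∈ Z₊*, ζ ∈ W* with ξ ≠ 0 such that ξ(y) + η(z) + ζ(w) ≥ ξ(ȳ) for all x ∈ D, y ∈ f(x), z ∈ g(x), w ∈ h(x), and min η(g(x̄)) = 0. Then x̄ is a weakly efficient solution of (VP). -/
open Pointwise

/-!
Feasibility of `x` provides `z ∈ g x` with `η z ≤ 0` and `0 ∈ h x`, so the Lagrange inequality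
gives `ξ ȳ ≤ ξ y`. Since a nonzero continuous functional is an open map, `ξ`, being nonnegative
on `Ypos`, is strictly positive on its interior; hence `ȳ - y ∉ interior Ypos`.
-/

theorem ContinuousLinearMap.pos_of_mem_interior_of_nonneg {E : Type*} [AddCommGroup E]
    [Module ℝ E] [TopologicalSpace E] [ContinuousAdd E] [ContinuousSMul ℝ E]
    {φ : E →L[ℝ] ℝ} (hφ : φ ≠ 0) {S : Set E} (hS : ∀ y ∈ S, 0 ≤ φ y) {u : E}
    (hu : u ∈ interior S) : 0 < φ u := by
  have hφS : φ '' S ⊆ Set.Ici 0 := by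
    rintro _ ⟨y, hy, rfl⟩
    exact hS y hy
  have : φ u ∈ interior (Set.Ici (0 : ℝ)) :=
    interior_mono hφS ((φ.isOpenMap_of_ne_zero hφ).image_interior_subset S ⟨u, hu, rfl⟩)
  simpa only [interior_Ici, Set.mem_Ioi] using this

theorem scalar_lagrange_sufficiency_general
    {X Y Z W : Type*}
    [AddCommGroup Y] [Module ℝ Y] [TopologicalSpace Y] [IsTopologicalAddGroup Y]
    [ContinuousSMul ℝ Y]
    [AddCommGroup Z] [Module ℝ Z] [TopologicalSpace Z]
    [AddCommGroup W] [Module ℝ W] [TopologicalSpace W]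
    (f : X → Set Y) (g : X → Set Z) (h : X → Set W)
    (Ypos : Set Y)
    (Zpos : Set Z)
    (D : Set X) (hD : D = {x | (g x ∩ (-Zpos)).Nonempty ∧ (0 : W) ∈ h x})
    (xbar : X) (ybar : Y) (hybar : ybar ∈ f xbar)
    -- existence of scalar Lagrange multipliers:
    (hmult : ∃ (ξ : Y →L[ℝ] ℝ) (η : Z →L[ℝ] ℝ) (ζ : W →L[ℝ] ℝ),
      ξ ≠ 0 ∧ (∀ y ∈ Ypos, 0 ≤ ξ y) ∧ (∀ z ∈ Zpos, 0 ≤ η z) ∧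
      (∀ x ∈ D, ∀ y ∈ f x, ∀ z ∈ g x, ∀ w ∈ h x, ξ ybar ≤ ξ y + η z + ζ w) ∧
      (∃ zbar ∈ g xbar, η zbar = 0) ∧ (∀ z ∈ g xbar, 0 ≤ η z)) :
    ∃ ybar' ∈ f xbar, ∀ x ∈ D, ∀ y ∈ f x, ybar' - y ∉ interior Ypos := by
  obtain ⟨ξ, η, ζ, hξ, hξpos, hηpos, hLagrange, -, -⟩ := hmult
  refine ⟨ybar, hybar, fun x hx y hy hint => ?_⟩
  obtain ⟨⟨z, hzg, hzneg⟩, hw⟩ : (g x ∩ (-Zpos)).Nonempty ∧ (0 : W) ∈ h x := by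
    rw [hD] at hx; exact hx
  have hηz : η z ≤ 0 := by simpa using hηpos (-z) hzneg
  have hle : ξ ybar ≤ ξ y :=
    calc ξ ybar ≤ ξ y + η z + ζ 0 := hLagrange x hx y hy z hzg 0 hw
      _ ≤ ξ y := by rw [map_zero]; linarith
  have hlt : 0 < ξ (ybar - y) := ξ.pos_of_mem_interior_of_nonneg hξ hξpos hint
  rw [map_sub] at hlt
  linarith

/-- Theorem 3.1 (sufficiency): under NNAMCQ, the existence of scalar Lagrange
multipliers with `ξ ≠ 0` and complementary slackness implies weak efficiency. -/
theorem scalar_lagrange_sufficiency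
    {X Y Z W : Type*}
    [AddCommGroup Y] [Module ℝ Y] [TopologicalSpace Y] [IsTopologicalAddGroup Y]
    [ContinuousSMul ℝ Y]
    [AddCommGroup Z] [Module ℝ Z] [TopologicalSpace Z] [IsTopologicalAddGroup Z]
    [ContinuousSMul ℝ Z]
    [AddCommGroup W] [Module ℝ W] [TopologicalSpace W] [IsTopologicalAddGroup W]
    [ContinuousSMul ℝ W]
    (f : X → Set Y) (g : X → Set Z) (h : X → Set W)
    (Ypos : Set Y) (hYconv : Convex ℝ Ypos) (hY0 : (0 : Y) ∈ Ypos)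
    (hYcone : ∀ t : ℝ, 0 < t → t • Ypos ⊆ Ypos)
    (hYint : (interior Ypos).Nonempty)
    (Zpos : Set Z)
    (D : Set X) (hD : D = {x | (g x ∩ (-Zpos)).Nonempty ∧ (0 : W) ∈ h x})
    (xbar : X) (hxbar : xbar ∈ D) (ybar : Y) (hybar : ybar ∈ f xbar)
    -- NNAMCQ holds at `xbar`:
    (hNNAMCQ : ∀ (η : Z →L[ℝ] ℝ) (ζ : W →L[ℝ] ℝ),
      (∀ z ∈ Zpos, 0 ≤ η z) →
      (∀ x ∈ D, ∀ z ∈ g x, ∀ w ∈ h x, 0 ≤ η z + ζ w) →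
      (∃ x ∈ D, ∃ z ∈ g x, ∃ w ∈ h x, η z + ζ w = 0) →
      ((∃ zbar ∈ g xbar, η zbar = 0) ∧ ∀ z ∈ g xbar, 0 ≤ η z) →
      η = 0 ∧ ζ = 0)
    -- existence of scalar Lagrange multipliers:
    (hmult : ∃ (ξ : Y →L[ℝ] ℝ) (η : Z →L[ℝ] ℝ) (ζ : W →L[ℝ] ℝ),
      ξ ≠ 0 ∧ (∀ y ∈ Ypos, 0 ≤ ξ y) ∧ (∀ z ∈ Zpos, 0 ≤ η z) ∧
      (∀ x ∈ D, ∀ y ∈ f x, ∀ z ∈ g x, ∀ w ∈ h x, ξ ybar ≤ ξ y + η z + ζ w) ∧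
      (∃ zbar ∈ g xbar, η zbar = 0) ∧ (∀ z ∈ g xbar, 0 ≤ η z)) :
    ∃ ybar' ∈ f xbar, ∀ x ∈ D, ∀ y ∈ f x, ybar' - y ∉ interior Ypos :=
  scalar_lagrange_sufficiency_general f g h Ypos Zpos D hD xbar ybar hybar hmult
end
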